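/- arXiv:1702.05932 — 6 statements merged into one kernel-verified Lean document; each statement's English description precedes it below -/
import Mathlib

section
/- Let A be a permutation-like array of n distinct elements and let kmax = max over elements a of |pos(a) - rank(a)| be the maximum displacement. If A[i] > A[j], then i ≥ j - (2·kmax - 1). -/
/-!
Rank is strictly monotone in the value, so `A j < A i` forces `rank A j < rank A i`.
Each position lies within `kmax` of its rank, hence
`i ≥ rank A i - kmax ≥ rank A j + 1 - kmax ≥ j + 1 - 2 kmax`.
-/

/-- `rank A i` is the number of elements of the array `A` that are smaller than `A i`,
i.e. the (0-indexed) position `A i` would have in the sorted version of `A`. -/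
def rank {n : ℕ} (A : Fin n → ℤ) (i : Fin n) : ℕ :=
  (Finset.univ.filter (fun j => A j < A i)).card

theorem rank_lt_rank_of_lt {n : ℕ} {A : Fin n → ℤ} {i j : Fin n} (hij : A j < A i) :
    rank A j < rank A i := by
  refine Finset.card_lt_card (Finset.ssubset_iff_of_subset ?_ |>.mpr ⟨j, ?_, ?_⟩)
  · intro k hk
    simp only [Finset.mem_filter, Finset.mem_univ, true_and] at hk ⊢
    exact hk.trans hij
  · simpa using hij
  · simp

theorem displacement_inversion_bound_general {n : ℕ} (A : Fin n → ℤ)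
    (kmax : ℕ)
    (hdisp : ∀ i : Fin n, ((i : ℤ) - rank A i).natAbs ≤ kmax)
    (i j : Fin n) (hij : A j < A i) :
    (i : ℤ) ≥ (j : ℤ) - (2 * (kmax : ℤ) - 1) := by
  have hrank := rank_lt_rank_of_lt hij
  have hi := hdisp i
  have hj := hdisp j
  omega

/-- If every element of a distinct array is displaced by at most `kmax` positions from
its rank, then `A i > A j` implies `i ≥ j - (2 kmax - 1)`. -/
theorem displacement_inversion_bound {n : ℕ} (A : Fin n → ℤ)
    (hinj : Function.Injective A) (kmax : ℕ)
    (hdisp : ∀ i : Fin n, ((i : ℤ) - rank A i).natAbs ≤ kmax)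
    (i j : Fin n) (hij : A j < A i) :
    (i : ℤ) ≥ (j : ℤ) - (2 * (kmax : ℤ) - 1) :=
  displacement_inversion_bound_general A kmax hdisp i j hij
end

section
/- For any array A, the minimum number of element moves needed to sort A equals n minus the length of a longest nondecreasing subsequence of A, i.e., kmov = kseq. -/
/-!
Removing one element from a list lowers `kseq` by at most one, and inserting one never lowers it;
since a move is a removal followed by an insertion, it lowers `kseq` by at most one, and a sorted
list has `kseq = 0`. Conversely, if `t` is a longest nondecreasing subsequence, each element
outside `t` can in turn be moved to its ordered position relative to `t`, so `kseq` moves suffice.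
-/

/-- `reachN step k a b`: `b` is reachable from `a` in exactly `k` steps of `step`. -/
def reachN {α : Type*} (step : α → α → Prop) : ℕ → α → α → Prop
  | 0, a, b => a = b
  | k + 1, a, b => ∃ c, step a c ∧ reachN step k c b

/-- The minimum number of `step`-operations needed to turn `l` into a sorted list. -/
noncomputable def sortCost (step : List ℤ → List ℤ → Prop) (l : List ℤ) : ℕ :=
  sInf {k | ∃ l', reachN step k l l' ∧ l'.Pairwise (· ≤ ·)}

/-- One element move: remove the element at position `i` and reinsert it at position `j`. -/
def moveStep (l l' : List ℤ) : Prop :=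
  ∃ (i j : ℕ) (x : ℤ), l[i]? = some x ∧ l' = (l.eraseIdx i).insertIdx j x

/-- One replacement: the two lists have the same length and differ in at most one position. -/
def repStep (l l' : List ℤ) : Prop :=
  l.length = l'.length ∧ ∃ i : ℕ, ∀ j : ℕ, j ≠ i → l[j]? = l'[j]?

/-- One adjacent transposition. -/
def adjSwapStep (l l' : List ℤ) : Prop :=
  ∃ (l₁ l₂ : List ℤ) (a b : ℤ), l = l₁ ++ a :: b :: l₂ ∧ l' = l₁ ++ b :: a :: l₂

/-- One (arbitrary) transposition: the contents of positions `i` and `j` are exchanged. -/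
def swapStep (l l' : List ℤ) : Prop :=
  ∃ i j : ℕ, l.length = l'.length ∧ l'[i]? = l[j]? ∧ l'[j]? = l[i]? ∧
    ∀ k : ℕ, k ≠ i → k ≠ j → l'[k]? = l[k]?

/-- One block swap: two disjoint contiguous blocks are exchanged. -/
def blockSwapStep (l l' : List ℤ) : Prop :=
  ∃ p x q y r : List ℤ, l = p ++ x ++ q ++ y ++ r ∧ l' = p ++ y ++ q ++ x ++ r

/-- One restricted block swap: two disjoint contiguous blocks of equal length are exchanged. -/
def rblockSwapStep (l l' : List ℤ) : Prop :=
  ∃ p x q y r : List ℤ, x.length = y.length ∧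
    l = p ++ x ++ q ++ y ++ r ∧ l' = p ++ y ++ q ++ x ++ r

/-- One block move: a contiguous block is removed and reinserted elsewhere. -/
def blockMoveStep (l l' : List ℤ) : Prop :=
  ∃ p x q r : List ℤ, l = p ++ x ++ q ++ r ∧ l' = p ++ q ++ x ++ r

/-- The length of a longest nondecreasing subsequence of `l`. -/
noncomputable def lisLen (l : List ℤ) : ℕ :=
  sSup {m | ∃ t : List ℤ, t.Sublist l ∧ t.Pairwise (· ≤ ·) ∧ t.length = m}

/-- `kseq l` is `n` minus the length of a longest nondecreasing subsequence. -/
noncomputable def kseq (l : List ℤ) : ℕ := l.length - lisLen l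

/-- The number of inversions of `l`. -/
def kinv (l : List ℤ) : ℕ :=
  (((Finset.range l.length) ×ˢ (Finset.range l.length)).filter
    (fun p => p.1 < p.2 ∧ l.getD p.2 0 < l.getD p.1 0)).card

/-- The number of adjacent inversions of `l`. -/
def kainv (l : List ℤ) : ℕ :=
  ((Finset.range (l.length - 1)).filter (fun i => l.getD (i + 1) 0 < l.getD i 0)).card

namespace List

variable {α : Type*}

theorem insertIdx_length_append (a b : List α) (x : α) :
    (a ++ b).insertIdx a.length x = a ++ x :: b := by
  induction a with
  | nil => simp
  | cons y a ih => simp [insertIdx_succ_cons, ih]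

theorem exists_insertIdx_eq_append_cons {l : List α} {i : ℕ} (hi : i ≤ l.length) (x : α) :
    ∃ a b, l = a ++ b ∧ l.insertIdx i x = a ++ x :: b := by
  refine ⟨l.take i, l.drop i, (take_append_drop i l).symm, ?_⟩
  conv_lhs => rw [← take_append_drop i l]
  simpa [length_take, Nat.min_eq_left hi] using insertIdx_length_append (l.take i) (l.drop i) x

theorem exists_eq_append_cons_eraseIdx {l : List α} {i : ℕ} {x : α} (hx : l[i]? = some x) :
    ∃ a b, l = a ++ x :: b ∧ l.eraseIdx i = a ++ b := by
  obtain ⟨hi, rfl⟩ := getElem?_eq_some_iff.mp hx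
  refine ⟨l.take i, l.drop (i + 1), ?_, eraseIdx_eq_take_drop_succ l i⟩
  rw [← drop_eq_getElem_cons hi, take_append_drop]

theorem Sublist.exists_sublist_append_of_sublist_append_cons {t a b : List α} {x : α}
    (h : t <+ a ++ x :: b) : ∃ s, s <+ t ∧ s <+ a ++ b ∧ t.length ≤ s.length + 1 := by
  obtain ⟨t₁, t₂, rfl, h₁, h₂⟩ := sublist_append_iff.mp h
  rcases sublist_cons_iff.mp h₂ with h₂ | ⟨r, rfl, hr⟩
  · exact ⟨t₁ ++ t₂, Sublist.refl _, h₁.append h₂, by omega⟩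
  · exact ⟨t₁ ++ r, (Sublist.refl t₁).append (sublist_cons_self x r), h₁.append hr,
      by simp; omega⟩

theorem Sublist.exists_sublist_eraseIdx {t l : List α} (h : t <+ l) (hlen : t.length < l.length) :
    ∃ i x, l[i]? = some x ∧ t <+ l.eraseIdx i := by
  induction h with
  | slnil => simp at hlen
  | @cons t l a h _ => exact ⟨0, a, rfl, by simpa using h⟩
  | @cons_cons t l a _ ih =>
    obtain ⟨i, x, hx, hsub⟩ := ih (by simpa using hlen)
    exact ⟨i + 1, x, by simpa using hx, by simpa using hsub.cons_cons a⟩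

theorem Sublist.exists_insertIdx_sublist {t₁ t₂ m : List α} (h : t₁ ++ t₂ <+ m) (x : α) :
    ∃ j ≤ m.length, t₁ ++ x :: t₂ <+ m.insertIdx j x := by
  obtain ⟨m₁, m₂, rfl, h₁, h₂⟩ := append_sublist_iff.mp h
  exact ⟨m₁.length, by simp, insertIdx_length_append m₁ m₂ x ▸ h₁.append (h₂.cons_cons x)⟩

end List

theorem bddAbove_lisLen (l : List ℤ) :
    BddAbove {m | ∃ t : List ℤ, t.Sublist l ∧ t.Pairwise (· ≤ ·) ∧ t.length = m} :=
  ⟨l.length, fun _ ⟨_, ht, _, hm⟩ => hm ▸ ht.length_le⟩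

theorem List.Sublist.length_le_lisLen {t l : List ℤ} (ht : t.Sublist l)
    (hsorted : t.Pairwise (· ≤ ·)) : t.length ≤ lisLen l :=
  le_csSup (bddAbove_lisLen l) ⟨t, ht, hsorted, rfl⟩

theorem exists_sublist_length_eq_lisLen (l : List ℤ) :
    ∃ t : List ℤ, t.Sublist l ∧ t.Pairwise (· ≤ ·) ∧ t.length = lisLen l := by
  apply Nat.sSup_mem _ (bddAbove_lisLen l)
  exact ⟨0, [], List.nil_sublist l, List.Pairwise.nil, rfl⟩

theorem lisLen_le_length (l : List ℤ) : lisLen l ≤ l.length := by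
  obtain ⟨t, ht, -, hlen⟩ := exists_sublist_length_eq_lisLen l
  exact hlen ▸ ht.length_le

theorem List.Sublist.lisLen_le {l l' : List ℤ} (h : l.Sublist l') : lisLen l ≤ lisLen l' := by
  obtain ⟨t, ht, hsorted, hlen⟩ := exists_sublist_length_eq_lisLen l
  exact hlen ▸ (ht.trans h).length_le_lisLen hsorted

theorem lisLen_append_cons_le (a b : List ℤ) (x : ℤ) :
    lisLen (a ++ x :: b) ≤ lisLen (a ++ b) + 1 := by
  obtain ⟨t, ht, hsorted, hlen⟩ := exists_sublist_length_eq_lisLen (a ++ x :: b)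
  obtain ⟨s, hst, hs, hlen'⟩ := ht.exists_sublist_append_of_sublist_append_cons
  have := hs.length_le_lisLen (hsorted.sublist hst)
  omega

theorem kseq_eq_zero_of_pairwise {l : List ℤ} (h : l.Pairwise (· ≤ ·)) : kseq l = 0 := by
  have := (List.Sublist.refl l).length_le_lisLen h
  unfold kseq
  omega

theorem kseq_append_le_kseq_append_cons (a b : List ℤ) (x : ℤ) :
    kseq (a ++ b) ≤ kseq (a ++ x :: b) := by
  have := lisLen_append_cons_le a b x
  unfold kseq
  simp only [List.length_append, List.length_cons]
  omega

theorem kseq_append_cons_le (a b : List ℤ) (x : ℤ) :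
    kseq (a ++ x :: b) ≤ kseq (a ++ b) + 1 := by
  have := (List.Sublist.refl a).append (List.sublist_cons_self x b) |>.lisLen_le
  have := lisLen_le_length (a ++ b)
  unfold kseq
  simp only [List.length_append, List.length_cons] at *
  omega

theorem kseq_le_of_moveStep {l l' : List ℤ} (h : moveStep l l') : kseq l ≤ kseq l' + 1 := by
  obtain ⟨i, j, x, hx, rfl⟩ := h
  obtain ⟨a, b, rfl, herase⟩ := List.exists_eq_append_cons_eraseIdx hx
  rw [herase]
  by_cases hj : j ≤ (a ++ b).length
  · obtain ⟨c, d, hcd, hins⟩ := List.exists_insertIdx_eq_append_cons hj x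
    have herase_le := kseq_append_cons_le a b x
    have hinsert_ge := kseq_append_le_kseq_append_cons c d x
    rw [hcd] at herase_le
    rw [hins]
    omega
  · rw [List.insertIdx_of_length_lt (by omega)]
    exact kseq_append_cons_le a b x

theorem kseq_le_of_reachN {k : ℕ} {l l' : List ℤ} (h : reachN moveStep k l l')
    (hsorted : l'.Pairwise (· ≤ ·)) : kseq l ≤ k := by
  induction k generalizing l with
  | zero => cases h; exact (kseq_eq_zero_of_pairwise hsorted).le
  | succ k ih =>
    obtain ⟨c, hstep, hc⟩ := h
    have := kseq_le_of_moveStep hstep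
    have := ih hc
    omega

theorem exists_moveStep_extending_sorted_sublist {l t : List ℤ} (ht : t.Sublist l)
    (hsorted : t.Pairwise (· ≤ ·)) (hlen : t.length < l.length) :
    ∃ l' t' : List ℤ, moveStep l l' ∧ l'.length = l.length ∧ t'.Sublist l' ∧
      t'.Pairwise (· ≤ ·) ∧ t'.length = t.length + 1 := by
  obtain ⟨i, x, hx, hsub⟩ := ht.exists_sublist_eraseIdx hlen
  rw [← List.takeWhile_append_dropWhile (p := fun b => decide ¬x ≤ b) (l := t)] at hsub
  obtain ⟨j, hj, hsub'⟩ := hsub.exists_insertIdx_sublist x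
  have hi : i < l.length := (List.getElem?_eq_some_iff.mp hx).1
  refine ⟨(l.eraseIdx i).insertIdx j x, t.orderedInsert (· ≤ ·) x, ⟨i, j, x, hx, rfl⟩, ?_,
    List.orderedInsert_eq_take_drop (· ≤ ·) x t ▸ hsub', hsorted.orderedInsert x t,
    List.orderedInsert_length _ _ _⟩
  rw [List.length_insertIdx_of_le_length hj, List.length_eraseIdx_of_lt hi]
  omega

theorem exists_reachN_moveStep_sorted {l t : List ℤ} (ht : t.Sublist l)
    (hsorted : t.Pairwise (· ≤ ·)) :
    ∃ l', reachN moveStep (l.length - t.length) l l' ∧ l'.Pairwise (· ≤ ·) := by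
  induction hk : l.length - t.length generalizing l t with
  | zero => exact ⟨l, rfl, ht.eq_of_length (by have := ht.length_le; omega) ▸ hsorted⟩
  | succ k ih =>
    obtain ⟨l', t', hstep, hlen, ht', hsorted', htlen⟩ :=
      exists_moveStep_extending_sorted_sublist ht hsorted (by omega)
    obtain ⟨l'', hreach, hl''⟩ := ih ht' hsorted' (by omega)
    exact ⟨l'', ⟨l', hstep, hreach⟩, hl''⟩

/-- The minimum number of element moves needed to sort an array equals
`n` minus the length of a longest nondecreasing subsequence. -/
theorem kmov_eq_kseq (l : List ℤ) : sortCost moveStep l = kseq l := by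
  obtain ⟨t, ht, hsorted, hlen⟩ := exists_sublist_length_eq_lisLen l
  obtain ⟨l', hreach, hl'⟩ := exists_reachN_moveStep_sorted ht hsorted
  rw [hlen] at hreach
  exact le_antisymm (Nat.sInf_le ⟨l', hreach, hl'⟩)
    (le_csInf ⟨_, l', hreach, hl'⟩ fun _ ⟨_, h, hs⟩ => kseq_le_of_reachN h hs)
end

section
/- For any array A, the minimum number of element replacements needed to sort A is at most the number of inversions of A, i.e., krep ≤ kinv. -/
/-!
Let `i` be the leftmost position that starts an inversion and `v` the smallest entry to its
right. Every entry before `i` is at most `v` (otherwise it would start an inversion), so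
replacing the entry at `i` by `v` creates no inversion and destroys those starting at `i`.
Each replacement thus lowers the number of inversions, and at most `kinv l` of them sort `l`.
-/

namespace List

theorem getD_set_ne {α : Type*} (l : List α) {i j : ℕ} (v d : α) (h : j ≠ i) :
    (l.set i v).getD j d = l.getD j d := by
  simp [getD, getElem?_set_ne (Ne.symm h)]

theorem getD_set_self {α : Type*} (l : List α) {i : ℕ} (v d : α) (h : i < l.length) :
    (l.set i v).getD i d = v := by
  simp [getD, h]

def invPairs (l : List ℤ) : Finset (ℕ × ℕ) :=
  ((Finset.range l.length) ×ˢ (Finset.range l.length)).filter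
    (fun p => p.1 < p.2 ∧ l.getD p.2 0 < l.getD p.1 0)

theorem mem_invPairs {l : List ℤ} {p q : ℕ} :
    (p, q) ∈ l.invPairs ↔ p < q ∧ q < l.length ∧ l.getD q 0 < l.getD p 0 := by
  simp only [invPairs, Finset.mem_filter, Finset.mem_product, Finset.mem_range]
  constructor
  · rintro ⟨⟨-, hq⟩, hpq, hlt⟩
    exact ⟨hpq, hq, hlt⟩
  · rintro ⟨hpq, hq, hlt⟩
    exact ⟨⟨hpq.trans hq, hq⟩, hpq, hlt⟩

theorem invPairs_set_subset {l : List ℤ} {i : ℕ} {v : ℤ} (hi : i < l.length)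
    (hbefore : ∀ p < i, l.getD p 0 ≤ v)
    (hafter : ∀ q, i < q → q < l.length → v ≤ l.getD q 0) :
    (l.set i v).invPairs ⊆ l.invPairs := by
  rintro ⟨p, q⟩ hpq
  rw [mem_invPairs, length_set] at hpq
  obtain ⟨hpq, hq, hlt⟩ := hpq
  refine mem_invPairs.mpr ⟨hpq, hq, ?_⟩
  rcases eq_or_ne p i with rfl | hpi
  · rw [getD_set_self l v 0 hi, getD_set_ne l v 0 hpq.ne'] at hlt
    exact absurd (hafter q hpq hq) hlt.not_ge
  rcases eq_or_ne q i with rfl | hqi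
  · rw [getD_set_self l v 0 hi, getD_set_ne l v 0 hpi] at hlt
    exact absurd (hbefore p hpq) hlt.not_ge
  rwa [getD_set_ne l v 0 hpi, getD_set_ne l v 0 hqi] at hlt

end List

open List

theorem kinv_eq_card_invPairs (l : List ℤ) : kinv l = l.invPairs.card := rfl

theorem pairwise_le_of_kinv_eq_zero {l : List ℤ} (h : kinv l = 0) : l.Pairwise (· ≤ ·) := by
  rw [pairwise_iff_getElem]
  intro p q hp hq hpq
  by_contra! hlt
  have hmem : (p, q) ∈ l.invPairs := by
    rw [mem_invPairs, getD_eq_getElem l 0 hp, getD_eq_getElem l 0 hq]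
    exact ⟨hpq, hq, hlt⟩
  rw [kinv_eq_card_invPairs, Finset.card_eq_zero] at h
  simp [h] at hmem

theorem repStep_set (l : List ℤ) (i : ℕ) (v : ℤ) : repStep l (l.set i v) :=
  ⟨(length_set ..).symm, i, fun _ hj => (getElem?_set_ne (Ne.symm hj)).symm⟩

theorem exists_repStep_kinv_lt {l : List ℤ} (h : kinv l ≠ 0) :
    ∃ l', repStep l l' ∧ kinv l' < kinv l := by
  classical
  have hstart : ∃ i, ∃ q, (i, q) ∈ l.invPairs := by
    rw [kinv_eq_card_invPairs, Finset.card_ne_zero] at h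
    obtain ⟨⟨i, q⟩, hiq⟩ := h
    exact ⟨i, q, hiq⟩
  set i := Nat.find hstart
  obtain ⟨q₀, hq₀⟩ := Nat.find_spec hstart
  obtain ⟨hiq₀, hq₀n, -⟩ := mem_invPairs.mp hq₀
  obtain ⟨b, hb, hbmin⟩ := (Finset.Ioo i l.length).exists_min_image (l.getD · 0)
    ⟨q₀, Finset.mem_Ioo.mpr ⟨hiq₀, hq₀n⟩⟩
  rw [Finset.mem_Ioo] at hb
  have hafter : ∀ q, i < q → q < l.length → l.getD b 0 ≤ l.getD q 0 :=
    fun q hiq hq => hbmin q (Finset.mem_Ioo.mpr ⟨hiq, hq⟩)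
  have hbefore : ∀ p < i, l.getD p 0 ≤ l.getD b 0 := by
    intro p hp
    by_contra! hlt
    exact Nat.find_min hstart hp ⟨b, mem_invPairs.mpr ⟨hp.trans hb.1, hb.2, hlt⟩⟩
  have hi : i < l.length := hiq₀.trans hq₀n
  have hremoved : (i, q₀) ∉ (l.set i (l.getD b 0)).invPairs := by
    rw [mem_invPairs, getD_set_self l _ 0 hi, getD_set_ne l _ 0 hiq₀.ne']
    exact fun ⟨_, _, hlt⟩ => (hafter q₀ hiq₀ hq₀n).not_gt hlt
  refine ⟨l.set i (l.getD b 0), repStep_set l i _, ?_⟩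
  rw [kinv_eq_card_invPairs, kinv_eq_card_invPairs]
  exact Finset.card_lt_card ((Finset.ssubset_iff_of_subset
    (invPairs_set_subset hi hbefore hafter)).mpr ⟨(i, q₀), hq₀, hremoved⟩)

theorem exists_reachN_repStep_pairwise_le (l : List ℤ) :
    ∃ k ≤ kinv l, ∃ m, reachN repStep k l m ∧ m.Pairwise (· ≤ ·) := by
  by_cases h : kinv l = 0
  · exact ⟨0, Nat.zero_le _, l, rfl, pairwise_le_of_kinv_eq_zero h⟩
  obtain ⟨l', hstep, hlt⟩ := exists_repStep_kinv_lt h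
  obtain ⟨k, hk, m, hreach, hm⟩ := exists_reachN_repStep_pairwise_le l'
  exact ⟨k + 1, by omega, m, ⟨l', hstep, hreach⟩, hm⟩
termination_by kinv l

theorem sortCost_le_of_reachN {step : List ℤ → List ℤ → Prop} {k : ℕ} {l m : List ℤ}
    (hreach : reachN step k l m) (hm : m.Pairwise (· ≤ ·)) : sortCost step l ≤ k :=
  Nat.sInf_le ⟨m, hreach, hm⟩

/-- The minimum number of replacements needed to sort an array is at most its
number of inversions. -/
theorem krep_le_kinv (l : List ℤ) : sortCost repStep l ≤ kinv l := by
  obtain ⟨k, hk, m, hreach, hm⟩ := exists_reachN_repStep_pairwise_le l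
  exact (sortCost_le_of_reachN hreach hm).trans hk
end

section
/- For any array A, the minimum number of block swaps needed to sort A satisfies kbswap ≤ kbmov ≤ 2·kbswap, where kbmov is the minimum number of block moves needed to sort A. -/
/-
Moving a block `x` past `q` is the block swap of `x` with `q`, and swapping `x` with `y` across
`q` is the move of `x` past `q ++ y` followed by the move of `q` past `y`.  So every sorting
sequence of `k` block moves is one of `k` block swaps, and every sorting sequence of `k` block
swaps yields one of `2k` block moves.  Insertion sort shows that a sorting sequence exists.
-/

section reachN

variable {α : Type*} {s t : α → α → Prop}

theorem reachN_one {a b : α} (h : s a b) : reachN s 1 a b := ⟨b, h, rfl⟩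

theorem reachN_add {a b c : α} :
    ∀ {m n : ℕ}, reachN s m a b → reachN s n b c → reachN s (m + n) a c
  | 0, _, hab, h => by
    rw [Nat.zero_add]
    exact (show a = b from hab) ▸ h
  | m + 1, n, ⟨d, hd, h⟩, h' => by
    rw [Nat.succ_add]
    exact ⟨d, hd, reachN_add h h'⟩

theorem reachN_map {β : Type*} {u : β → β → Prop} (f : α → β)
    (hf : ∀ a b, s a b → u (f a) (f b)) :
    ∀ {k : ℕ} {a b : α}, reachN s k a b → reachN u k (f a) (f b)
  | 0, _, _, hab => congrArg f (show _ = _ from hab)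
  | _ + 1, _, _, ⟨c, hc, h⟩ => ⟨f c, hf _ _ hc, reachN_map f hf h⟩

theorem reachN_mul_of_forall_reachN {c : ℕ}
    (hst : ∀ a b, s a b → reachN t c a b) :
    ∀ {k : ℕ} {a b : α}, reachN s k a b → reachN t (c * k) a b
  | 0, _, _, h => h
  | _ + 1, _, _, ⟨_, hd, h⟩ => by
    rw [Nat.mul_succ, Nat.add_comm]
    exact reachN_add (hst _ _ hd) (reachN_mul_of_forall_reachN hst h)

end reachN

theorem sortCost_le_mul_of_forall_reachN {s t : List ℤ → List ℤ → Prop} {c : ℕ}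
    (hst : ∀ a b, s a b → reachN t c a b) {l : List ℤ}
    (hl : ∃ k l', reachN s k l l' ∧ l'.Pairwise (· ≤ ·)) :
    sortCost t l ≤ c * sortCost s l := by
  obtain ⟨l', hl', hsorted⟩ := Nat.sInf_mem hl
  exact Nat.sInf_le ⟨l', reachN_mul_of_forall_reachN hst hl', hsorted⟩

theorem blockSwapStep_of_blockMoveStep {l l' : List ℤ} (h : blockMoveStep l l') :
    blockSwapStep l l' := by
  obtain ⟨p, x, q, r, rfl, rfl⟩ := h
  exact ⟨p, x, [], q, r, by simp, by simp⟩

theorem reachN_blockMoveStep_two_of_blockSwapStep {l l' : List ℤ} (h : blockSwapStep l l') :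
    reachN blockMoveStep 2 l l' := by
  obtain ⟨p, x, q, y, r, rfl, rfl⟩ := h
  refine ⟨p ++ q ++ y ++ x ++ r, ⟨p, x, q ++ y, r, by simp, by simp⟩,
    reachN_one ⟨p, q, y, x ++ r, by simp, by simp⟩⟩

theorem blockMoveStep_cons (a : ℤ) {l l' : List ℤ} (h : blockMoveStep l l') :
    blockMoveStep (a :: l) (a :: l') := by
  obtain ⟨p, x, q, r, rfl, rfl⟩ := h
  exact ⟨a :: p, x, q, r, by simp, by simp⟩

theorem blockMoveStep_cons_orderedInsert (a : ℤ) (l : List ℤ) :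
    blockMoveStep (a :: l) (l.orderedInsert (· ≤ ·) a) := by
  refine ⟨[], [a], l.takeWhile (fun b => ¬ a ≤ b), l.dropWhile (fun b => ¬ a ≤ b), ?_, ?_⟩
  · simp [List.takeWhile_append_dropWhile]
  · rw [List.orderedInsert_eq_take_drop]
    simp

theorem exists_reachN_blockMoveStep_sorted :
    ∀ l : List ℤ, ∃ k l', reachN blockMoveStep k l l' ∧ l'.Pairwise (· ≤ ·)
  | [] => ⟨0, [], rfl, .nil⟩
  | a :: l => by
    obtain ⟨k, l', hl', hsorted⟩ := exists_reachN_blockMoveStep_sorted l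
    exact ⟨k + 1, l'.orderedInsert (· ≤ ·) a,
      reachN_add (reachN_map (List.cons a) (fun _ _ => blockMoveStep_cons a) hl')
        (reachN_one (blockMoveStep_cons_orderedInsert a l')),
      hsorted.orderedInsert a l'⟩

/-- `kbswap ≤ kbmov ≤ 2 · kbswap` for the minimum numbers of block swaps and
block moves needed to sort an array. -/
theorem kbswap_le_kbmov_le_two_kbswap (l : List ℤ) :
    sortCost blockSwapStep l ≤ sortCost blockMoveStep l ∧
    sortCost blockMoveStep l ≤ 2 * sortCost blockSwapStep l := by
  have hmove_swap : ∀ a b, blockMoveStep a b → reachN blockSwapStep 1 a b :=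
    fun _ _ h => reachN_one (blockSwapStep_of_blockMoveStep h)
  have hmove := exists_reachN_blockMoveStep_sorted l
  have hswap : ∃ k l', reachN blockSwapStep k l l' ∧ l'.Pairwise (· ≤ ·) := by
    obtain ⟨k, l', hl', hsorted⟩ := hmove
    exact ⟨1 * k, l', reachN_mul_of_forall_reachN hmove_swap hl', hsorted⟩
  constructor
  · simpa using sortCost_le_mul_of_forall_reachN hmove_swap hmove
  · exact sortCost_le_mul_of_forall_reachN
      (fun _ _ => reachN_blockMoveStep_two_of_blockSwapStep) hswap
end

section
/- A single block swap applied to any array increases the number of adjacent inversions by at most 2; consequently, for any array A, kainv ≤ 2·kbswap. -/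
/-!
Cutting a list into blocks, `kainv` is the sum of the `kainv` of the blocks plus the descents
across the cuts. A block swap `p x q y r ↦ p y q x r` therefore only changes the at most four
descents across the cuts, and a cyclic-order argument shows that at most two of them can be new.
Block swaps are reversible and sorted lists have no descents, so every step of a sorting
sequence removes at most two adjacent inversions.
-/

def descentAt {α : Type*} [LinearOrder α] : Option α → Option α → ℕ
  | some a, some b => if b < a then 1 else 0
  | _, _ => 0

def boundaryDescent (l m : List ℤ) : ℕ := descentAt l.getLast? m.head?

@[simp]
theorem kainv_nil : kainv [] = 0 := rfl

@[simp]
theorem kainv_singleton (a : ℤ) : kainv [a] = 0 := rfl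

theorem kainv_cons_cons (a b : ℤ) (t : List ℤ) :
    kainv (a :: b :: t) = (if b < a then 1 else 0) + kainv (b :: t) := by
  simp only [kainv, List.length_cons, Nat.add_sub_cancel, Finset.card_filter,
    Finset.sum_range_succ', List.getD_cons_succ, List.getD_cons_zero]
  omega

theorem kainv_append : ∀ l m : List ℤ, kainv (l ++ m) = kainv l + kainv m + boundaryDescent l m
  | [], m => by simp [boundaryDescent, descentAt]
  | [a], [] => by simp [boundaryDescent, descentAt]
  | [a], b :: m => by simp [kainv_cons_cons, boundaryDescent, descentAt]; omega
  | a :: b :: l, m => by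
    rw [List.cons_append, List.cons_append, kainv_cons_cons, ← List.cons_append,
      kainv_append (b :: l) m, kainv_cons_cons]
    simp only [boundaryDescent, List.getLast?_cons_cons]
    omega

theorem kainv_eq_zero_of_pairwise : ∀ {l : List ℤ}, l.Pairwise (· ≤ ·) → kainv l = 0
  | [], _ | [_], _ => rfl
  | a :: b :: t, h => by
    rw [kainv_cons_cons, if_neg (not_lt.2 (List.rel_of_pairwise_cons h (by simp))),
      kainv_eq_zero_of_pairwise h.of_cons]

/- With `P` the last entry of `p`, `X₁`, `X₂` the first and last entries of `x`, and so on, when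
all blocks are nonempty the new boundary descents pair off against the old ones:
`[P > Y₁] + [Q₂ > X₁] ≤ [P > X₁] + [Q₂ > Y₁] + 1`, as otherwise `P ≤ X₁ < Q₂ ≤ Y₁ < P`, and
`[Y₂ > Q₁] + [X₂ > R] ≤ [X₂ > Q₁] + [Y₂ > R] + 1`, as otherwise `Y₂ ≤ R < X₂ ≤ Q₁ < Y₂`.
Empty blocks lead to similar cyclic contradictions. -/
theorem descentAt_blockSwap_le {α : Type*} [LinearOrder α] (P X₁ X₂ Q₁ Q₂ Y₁ Y₂ R : Option α)
    (hX : X₁ = none ↔ X₂ = none) (hQ : Q₁ = none ↔ Q₂ = none) (hY : Y₁ = none ↔ Y₂ = none) :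
    descentAt P (Y₁.or (Q₁.or (X₁.or R))) + descentAt Y₂ (Q₁.or (X₁.or R)) +
      descentAt Q₂ (X₁.or R) + descentAt X₂ R ≤
    descentAt P (X₁.or (Q₁.or (Y₁.or R))) + descentAt X₂ (Q₁.or (Y₁.or R)) +
      descentAt Q₂ (Y₁.or R) + descentAt Y₂ R + 2 := by
  rcases P with _ | P <;> rcases X₁ with _ | X₁ <;> rcases X₂ with _ | X₂ <;>
    rcases Q₁ with _ | Q₁ <;> rcases Q₂ with _ | Q₂ <;> rcases Y₁ with _ | Y₁ <;>
    rcases Y₂ with _ | Y₂ <;> rcases R with _ | R <;>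
    simp_all [descentAt] <;> split_ifs <;> first | omega | (exfalso; order)

theorem kainv_le_of_blockSwapStep {l l' : List ℤ} (h : blockSwapStep l l') :
    kainv l' ≤ kainv l + 2 := by
  obtain ⟨p, x, q, y, r, rfl, rfl⟩ := h
  have hnone (l : List ℤ) : l.head? = none ↔ l.getLast? = none := by simp
  have key := descentAt_blockSwap_le p.getLast? x.head? x.getLast? q.head? q.getLast?
    y.head? y.getLast? r.head? (hnone x) (hnone q) (hnone y)
  simp only [List.append_assoc, kainv_append, boundaryDescent, List.head?_append] at key ⊢
  omega

theorem blockSwapStep.symm {l l' : List ℤ} (h : blockSwapStep l l') : blockSwapStep l' l := by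
  obtain ⟨p, x, q, y, r, hl, hl'⟩ := h
  exact ⟨p, y, q, x, r, hl', hl⟩

theorem blockSwapStep.append_left (c : List ℤ) {l l' : List ℤ} (h : blockSwapStep l l') :
    blockSwapStep (c ++ l) (c ++ l') := by
  obtain ⟨p, x, q, y, r, rfl, rfl⟩ := h
  exact ⟨c ++ p, x, q, y, r, by simp, by simp⟩

theorem blockSwapStep_cons_orderedInsert (a : ℤ) (l : List ℤ) :
    blockSwapStep (a :: l) (l.orderedInsert (· ≤ ·) a) := by
  rw [List.orderedInsert_eq_take_drop]
  exact ⟨[], [a], [], l.takeWhile (fun b => ¬a ≤ b), l.dropWhile (fun b => ¬a ≤ b), by simp,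
    by simp⟩

theorem reflTransGen_blockSwapStep_insertionSort :
    ∀ l : List ℤ, Relation.ReflTransGen blockSwapStep l (l.insertionSort (· ≤ ·))
  | [] => .refl
  | a :: l =>
    ((reflTransGen_blockSwapStep_insertionSort l).lift (a :: ·)
      fun _ _ h => blockSwapStep.append_left [a] h).tail (blockSwapStep_cons_orderedInsert a _)

theorem exists_reachN_of_reflTransGen {α : Type*} {step : α → α → Prop} {a b : α}
    (h : Relation.ReflTransGen step a b) : ∃ k, reachN step k a b := by
  induction h using Relation.ReflTransGen.head_induction_on with
  | refl => exact ⟨0, rfl⟩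
  | head hac _ ih => obtain ⟨k, hk⟩ := ih; exact ⟨k + 1, _, hac, hk⟩

theorem le_of_reachN {α : Type*} {step : α → α → Prop} {f : α → ℕ} {c : ℕ}
    (hf : ∀ a b, step a b → f a ≤ f b + c) : ∀ {k : ℕ} {a b : α}, reachN step k a b →
      f a ≤ f b + c * k
  | 0, _, _, rfl => le_rfl
  | k + 1, _, _, ⟨_, hac, hcb⟩ => by
    have := hf _ _ hac
    have := le_of_reachN hf hcb
    rw [Nat.mul_succ]
    omega

/-- A single block swap increases the number of adjacent inversions by at most 2;
consequently `kainv ≤ 2 · kbswap`. -/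
theorem kainv_le_two_kbswap :
    (∀ l l' : List ℤ, blockSwapStep l l' → kainv l' ≤ kainv l + 2) ∧
    (∀ l : List ℤ, kainv l ≤ 2 * sortCost blockSwapStep l) := by
  refine ⟨fun _ _ => kainv_le_of_blockSwapStep, fun l => ?_⟩
  have hsortable : {k | ∃ l', reachN blockSwapStep k l l' ∧ l'.Pairwise (· ≤ ·)}.Nonempty := by
    obtain ⟨k, hk⟩ := exists_reachN_of_reflTransGen (reflTransGen_blockSwapStep_insertionSort l)
    exact ⟨k, _, hk, List.pairwise_insertionSort _ _⟩
  obtain ⟨l', hreach, hsorted⟩ := Nat.sInf_mem hsortable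
  have := le_of_reachN (fun _ _ h => kainv_le_of_blockSwapStep h.symm) hreach
  rwa [kainv_eq_zero_of_pairwise hsorted, zero_add] at this
end

section
/- For n ≥ 2, the array A = [n, 2, 3, ..., n-1, 1] can be sorted by a single transposition (kswap = 1) but has maximum displacement kmax = n - 1. -/
/-- The rank of the element at position `i` of `l`: the number of positions holding
smaller elements. -/
def rankL (l : List ℤ) (i : ℕ) : ℕ :=
  ((Finset.range l.length).filter (fun j => l.getD j 0 < l.getD i 0)).card

/-- The maximum displacement of the list `l` (for lists of distinct elements). -/
def kmaxL (l : List ℤ) : ℕ :=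
  (Finset.range l.length).sup (fun i => ((i : ℤ) - rankL l i).natAbs)

theorem sortCost_eq_one_of_step {step : List ℤ → List ℤ → Prop} {l l' : List ℤ}
    (hl : ¬ l.Pairwise (· ≤ ·)) (hstep : step l l') (hl' : l'.Pairwise (· ≤ ·)) :
    sortCost step l = 1 := by
  have one_mem : 1 ∈ {k | ∃ l', reachN step k l l' ∧ l'.Pairwise (· ≤ ·)} :=
    ⟨l', ⟨l', hstep, rfl⟩, hl'⟩
  have zero_not_mem : 0 ∉ {k | ∃ l', reachN step k l l' ∧ l'.Pairwise (· ≤ ·)} := by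
    rintro ⟨l'', rfl, hsorted⟩
    exact hl hsorted
  have hpos := Nat.pos_of_ne_zero fun h => zero_not_mem (h ▸ Nat.sInf_mem ⟨1, one_mem⟩)
  exact le_antisymm (Nat.sInf_le one_mem) hpos

theorem pairwise_le_cons_append_singleton {α : Type*} [Preorder α] {a b : α} {l : List α}
    (hl : l.Pairwise (· ≤ ·)) (ha : ∀ x ∈ l, a ≤ x) (hb : ∀ x ∈ l, x ≤ b) (hab : a ≤ b) :
    (a :: (l ++ [b])).Pairwise (· ≤ ·) := by
  refine List.pairwise_cons.2 ⟨?_, List.pairwise_append.2 ⟨hl, List.pairwise_singleton _ _, ?_⟩⟩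
  · simp only [List.mem_append, List.mem_singleton]
    rintro x (hx | rfl)
    exacts [ha x hx, hab]
  · simpa using hb

theorem swapStep_cons_append_singleton (a b : ℤ) (l : List ℤ) :
    swapStep (a :: (l ++ [b])) (b :: (l ++ [a])) := by
  refine ⟨0, l.length + 1, by simp, by simp, by simp, fun k hk0 hkl => ?_⟩
  obtain ⟨k, rfl⟩ := Nat.exists_eq_succ_of_ne_zero hk0
  rcases Nat.lt_or_gt_of_ne (show k ≠ l.length by omega) with hk | hk
  · simp [List.getElem?_append_left hk]
  · simp [hk]

theorem rankL_lt_length {l : List ℤ} {i : ℕ} (hi : i < l.length) : rankL l i < l.length := by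
  have hsub : (Finset.range l.length).filter (fun j => l.getD j 0 < l.getD i 0)
      ⊆ (Finset.range l.length).erase i :=
    fun j hj => Finset.mem_erase.2 ⟨fun hji => (hji ▸ (Finset.mem_filter.1 hj).2).false,
      (Finset.mem_filter.1 hj).1⟩
  calc rankL l i ≤ ((Finset.range l.length).erase i).card := Finset.card_le_card hsub
    _ < l.length := by
      rw [Finset.card_erase_of_mem (Finset.mem_range.2 hi), Finset.card_range]
      omega

theorem kmaxL_lt_length {l : List ℤ} (hl : l ≠ []) : kmaxL l < l.length := by
  have hpos := List.length_pos_of_ne_nil hl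
  refine (Finset.sup_lt_iff hpos).2 fun i hi => ?_
  have hi' := Finset.mem_range.1 hi
  have hrank := rankL_lt_length hi'
  omega

theorem rankL_cons_zero_of_forall_lt {a : ℤ} {l : List ℤ} (h : ∀ x ∈ l, x < a) :
    rankL (a :: l) 0 = l.length := by
  have : (Finset.range (a :: l).length).filter (fun j => (a :: l).getD j 0 < (a :: l).getD 0 0)
      = (Finset.range (l.length + 1)).erase 0 := by
    ext j
    rcases j with _ | j
    · simp
    · simp only [Finset.mem_filter, Finset.mem_erase, Finset.mem_range, List.length_cons,
        List.getD_cons_succ, List.getD_cons_zero]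
      constructor
      · rintro ⟨hj, -⟩
        exact ⟨j.succ_ne_zero, hj⟩
      · rintro ⟨-, hj⟩
        have hjl : j < l.length := Nat.lt_of_succ_lt_succ hj
        refine ⟨hj, ?_⟩
        rw [List.getD_eq_getElem _ _ hjl]
        exact h _ (List.getElem_mem hjl)
  rw [rankL, this, Finset.card_erase_of_mem (by simp), Finset.card_range]
  rfl

theorem kmaxL_cons_of_forall_lt {a : ℤ} {l : List ℤ} (h : ∀ x ∈ l, x < a) :
    kmaxL (a :: l) = l.length := by
  refine le_antisymm (Nat.lt_succ_iff.1 (kmaxL_lt_length (List.cons_ne_nil a l))) ?_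
  calc l.length = (((0 : ℕ) : ℤ) - rankL (a :: l) 0).natAbs := by
        simp [rankL_cons_zero_of_forall_lt h]
    _ ≤ kmaxL (a :: l) := Finset.le_sup (f := fun i : ℕ => ((i : ℤ) - rankL (a :: l) i).natAbs)
        (Finset.mem_range.2 (List.length_pos_of_ne_nil (List.cons_ne_nil a l)))

/-- The array `[n, 2, 3, …, n-1, 1]` can be sorted by a single transposition but has
maximum displacement `n - 1`. -/
theorem kmax_unbounded_by_kswap (n : ℕ) (hn : 2 ≤ n) :
    sortCost swapStep
      ((n : ℤ) :: ((List.range (n - 2)).map (fun i => (i : ℤ) + 2) ++ [(1 : ℤ)])) = 1 ∧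
    kmaxL ((n : ℤ) :: ((List.range (n - 2)).map (fun i => (i : ℤ) + 2) ++ [(1 : ℤ)]))
      = n - 1 := by
  set mid := (List.range (n - 2)).map (fun i => (i : ℤ) + 2) with hmid
  -- `i` is elaborated as an integer, so the range is first coerced to `List ℤ` by the list monad.
  have mid_eq : mid = (List.range (n - 2)).map (fun i : ℕ => (i : ℤ) + 2) := by
    simp only [hmid, List.pure_def, List.bind_eq_flatMap, ← List.map_eq_flatMap, List.map_map]
    rfl
  have mid_bounds : ∀ x ∈ mid, 1 < x ∧ x < n := by
    simp only [mid_eq, List.mem_map, List.mem_range]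
    rintro _ ⟨i, hi, rfl⟩
    omega
  have mid_sorted : mid.Pairwise (· ≤ ·) :=
    mid_eq ▸ List.pairwise_lt_range.map _ fun i j (hij : i < j) => by omega
  have all_lt : ∀ x ∈ mid ++ [1], x < (n : ℤ) := by
    simp only [List.mem_append, List.mem_singleton]
    rintro x (hx | rfl)
    · exact (mid_bounds x hx).2
    · omega
  refine ⟨sortCost_eq_one_of_step ?_ (swapStep_cons_append_singleton _ _ mid) ?_, ?_⟩
  · intro hsorted
    exact (all_lt 1 (by simp)).not_ge ((List.pairwise_cons.1 hsorted).1 1 (by simp))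
  · exact pairwise_le_cons_append_singleton mid_sorted (fun x hx => (mid_bounds x hx).1.le)
      (fun x hx => (mid_bounds x hx).2.le) (by omega)
  · rw [kmaxL_cons_of_forall_lt all_lt, List.length_append, mid_eq]
    simp only [List.length_map, List.length_range, List.length_singleton]
    omega
end
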